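/- arXiv:1405.0507 — 2 statements merged into one kernel-verified Lean document; each statement's English description precedes it below -/
import Mathlib

section
/- For every real x and all integers n ≥ 0, r ≥ 0, the neutrix limit as ε → 0⁺ of ∫_ε^{1/2} t^x (log t)^n (log(1−t))^r dt exists; that is, there exist a real number c and a negligible function N(ε) such that ∫_ε^{1/2} t^x (log t)^n (log(1−t))^r dt − N(ε) tends to c as ε → 0⁺. -/
open MeasureTheory Real Filter Set

/-- A negligible function: a finite real linear combination of `ε ↦ ε^λ (log ε)^k`
with `λ < 0` real and `k ∈ ℕ`, and `ε ↦ (log ε)^k` with `k ≥ 1`. -/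
def Negligible (N : ℝ → ℝ) : Prop :=
  ∃ (s : Finset (ℝ × ℕ)) (c : ℝ × ℕ → ℝ) (T : Finset ℕ) (d : ℕ → ℝ),
    (∀ p ∈ s, p.1 < 0) ∧ (∀ k ∈ T, 1 ≤ k) ∧
    ∀ ε : ℝ, N ε = (∑ p ∈ s, c p * ε ^ p.1 * Real.log ε ^ p.2) +
      ∑ k ∈ T, d k * Real.log ε ^ k

/-- `NeutrixLim F c` : the neutrix limit of `F ε` as `ε → 0⁺` is `c`, i.e. there is a
negligible function `N` with `F ε − N ε → c` as `ε → 0⁺`. -/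
def NeutrixLim (F : ℝ → ℝ) (c : ℝ) : Prop :=
  ∃ N : ℝ → ℝ, Negligible N ∧
    Tendsto (fun ε => F ε - N ε) (nhdsWithin 0 (Set.Ioi 0)) (nhds c)

open scoped Topology

/-!
Write `g t = log (1 - t) ^ r`, analytic near `[0, 1/2]`. If `x > -1`, the integrand
`t ^ x * log t ^ n * g t` is integrable at `0` (the logarithm costs less than any power), so the
ordinary limit exists. Otherwise split `g t = g 0 + t * ψ t` with `ψ = dslope g 0`, again analytic:
the integral of `t ^ x * log t ^ n` is computed from an explicit primitive
`∑ₖ bₖ t ^ (x + 1) * log t ^ k` (or `log t ^ (n + 1) / (n + 1)` when `x = -1`), whose value at `ε`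
is negligible, while the remaining term has exponent `x + 1`; after finitely many such steps the
exponent exceeds `-1`.
-/

lemma negligible_zero : Negligible fun _ => 0 :=
  ⟨∅, 0, ∅, 0, by simp, by simp, by simp⟩

lemma Negligible.add {N M : ℝ → ℝ} (hN : Negligible N) (hM : Negligible M) :
    Negligible fun ε => N ε + M ε := by
  classical
  obtain ⟨s₁, c₁, T₁, d₁, hs₁, hT₁, h₁⟩ := hN
  obtain ⟨s₂, c₂, T₂, d₂, hs₂, hT₂, h₂⟩ := hM
  refine ⟨s₁ ∪ s₂, fun p => (if p ∈ s₁ then c₁ p else 0) + (if p ∈ s₂ then c₂ p else 0),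
    T₁ ∪ T₂, fun k => (if k ∈ T₁ then d₁ k else 0) + (if k ∈ T₂ then d₂ k else 0),
    fun p hp => (Finset.mem_union.1 hp).elim (hs₁ p) (hs₂ p),
    fun k hk => (Finset.mem_union.1 hk).elim (hT₁ k) (hT₂ k), fun ε => ?_⟩
  simp only [add_mul, ite_mul, zero_mul, Finset.sum_add_distrib, Finset.sum_ite_mem,
    Finset.union_inter_cancel_left, Finset.union_inter_cancel_right, h₁, h₂]
  ring

lemma Negligible.const_mul {N : ℝ → ℝ} (hN : Negligible N) (a : ℝ) :
    Negligible fun ε => a * N ε := by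
  obtain ⟨s, c, T, d, hs, hT, h⟩ := hN
  refine ⟨s, fun p => a * c p, T, fun k => a * d k, hs, hT, fun ε => ?_⟩
  simp only [h, mul_add, Finset.mul_sum, mul_assoc]

lemma negligible_sum_rpow_mul_log_pow {l : ℝ} (hl : l < 0) (s : Finset ℕ) (b : ℕ → ℝ) :
    Negligible fun ε => ∑ k ∈ s, b k * ε ^ l * log ε ^ k :=
  ⟨s.map (Function.Embedding.sectR l ℕ), fun p => b p.2, ∅, 0, by simpa using fun _ _ => hl,
    by simp, fun ε => by simp⟩

lemma negligible_log_pow {k : ℕ} (hk : 1 ≤ k) (a : ℝ) :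
    Negligible fun ε => a * log ε ^ k :=
  ⟨∅, 0, {k}, fun _ => a, by simp, by simpa using hk, fun ε => by simp⟩

lemma neutrixLim_of_tendsto {F : ℝ → ℝ} {c : ℝ} (h : Tendsto F (𝓝[>] 0) (𝓝 c)) :
    NeutrixLim F c :=
  ⟨fun _ => 0, negligible_zero, by simpa using h⟩

lemma NeutrixLim.add {F G : ℝ → ℝ} {c d : ℝ} (hF : NeutrixLim F c) (hG : NeutrixLim G d) :
    NeutrixLim (fun ε => F ε + G ε) (c + d) := by
  obtain ⟨N, hN, hNt⟩ := hF
  obtain ⟨M, hM, hMt⟩ := hG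
  exact ⟨fun ε => N ε + M ε, hN.add hM, (hNt.add hMt).congr fun ε => by ring⟩

lemma NeutrixLim.mul_const {F : ℝ → ℝ} {c : ℝ} (hF : NeutrixLim F c) (a : ℝ) :
    NeutrixLim (fun ε => F ε * a) (c * a) := by
  obtain ⟨N, hN, hNt⟩ := hF
  exact ⟨fun ε => a * N ε, hN.const_mul a, (hNt.mul_const a).congr fun ε => by ring⟩

lemma NeutrixLim.congr {F G : ℝ → ℝ} {c : ℝ} (hF : NeutrixLim F c)
    (h : F =ᶠ[𝓝[>] 0] G) : NeutrixLim G c := by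
  obtain ⟨N, hN, hNt⟩ := hF
  exact ⟨N, hN, hNt.congr' (h.mono fun ε hε => by rw [hε])⟩

lemma neutrixLim_integral_of_hasDerivAt {f A : ℝ → ℝ} {b : ℝ} (hb : 0 < b)
    (hA : ∀ t, 0 < t → HasDerivAt A (f t) t) (hf : ContinuousOn f (Ioi 0))
    (hN : Negligible fun ε => -A ε) :
    NeutrixLim (fun ε => ∫ t in Ioo ε b, f t) (A b) := by
  refine ⟨_, hN, tendsto_const_nhds.congr' ?_⟩
  filter_upwards [Ioo_mem_nhdsGT hb] with ε hε
  rw [← integral_Ioc_eq_integral_Ioo, ← intervalIntegral.integral_of_le hε.2.le,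
    intervalIntegral.integral_eq_sub_of_hasDerivAt
      (fun t ht => hA t (hε.1.trans_le (uIcc_of_le hε.2.le ▸ ht).1))
      ((hf.mono fun t ht => hε.1.trans_le (uIcc_of_le hε.2.le ▸ ht).1).intervalIntegrable)]
  ring

lemma continuousOn_rpow_mul_log_pow (μ : ℝ) (n : ℕ) :
    ContinuousOn (fun t => t ^ μ * log t ^ n) (Ioi 0) :=
  fun t ht => ((continuousAt_rpow_const t μ (Or.inl (ne_of_gt ht))).mul
    ((continuousAt_log (ne_of_gt ht)).pow n)).continuousWithinAt

lemma exists_hasDerivAt_sum_rpow_mul_log_pow {μ : ℝ} (hμ : μ ≠ -1) (n : ℕ) :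
    ∃ b : ℕ → ℝ, ∀ t, 0 < t → HasDerivAt
      (fun s => ∑ k ∈ Finset.range (n + 1), b k * s ^ (μ + 1) * log s ^ k)
      (t ^ μ * log t ^ n) t := by
  have hμ1 : μ + 1 ≠ 0 := fun h => hμ (by linarith)
  have hpow : ∀ t, 0 < t → HasDerivAt (fun s => s ^ (μ + 1)) ((μ + 1) * t ^ μ) t := fun t ht => by
    simpa using hasDerivAt_rpow_const (p := μ + 1) (Or.inl ht.ne')
  induction n with
  | zero =>
    refine ⟨fun _ => (μ + 1)⁻¹, fun t ht => ?_⟩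
    simpa [hμ1] using (hpow t ht).const_mul (μ + 1)⁻¹
  | succ n ih =>
    -- `(s^(μ+1) log^(n+1) s)' = (μ+1) s^μ log^(n+1) s + (n+1) s^μ log^n s`
    obtain ⟨b, hb⟩ := ih
    refine ⟨fun k => if k = n + 1 then (μ + 1)⁻¹ else -((n + 1) * (μ + 1)⁻¹) * b k,
      fun t ht => ?_⟩
    have hlog : HasDerivAt (fun s => log s ^ (n + 1)) ((n + 1 : ℕ) * log t ^ n * t⁻¹) t := by
      simpa using (hasDerivAt_log ht.ne').fun_pow (n + 1)
    have hsum : (fun s => ∑ k ∈ Finset.range (n + 1 + 1),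
          (if k = n + 1 then (μ + 1)⁻¹ else -((n + 1) * (μ + 1)⁻¹) * b k) *
            s ^ (μ + 1) * log s ^ k) =
        fun s => (μ + 1)⁻¹ * (s ^ (μ + 1) * log s ^ (n + 1)) - (n + 1) * (μ + 1)⁻¹ *
          ∑ k ∈ Finset.range (n + 1), b k * s ^ (μ + 1) * log s ^ k := by
      funext s
      have hlow : ∀ k ∈ Finset.range (n + 1),
          (if k = n + 1 then (μ + 1)⁻¹ else -((n + 1) * (μ + 1)⁻¹) * b k) *
            s ^ (μ + 1) * log s ^ k = -((n + 1) * (μ + 1)⁻¹ * (b k * s ^ (μ + 1) * log s ^ k)) :=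
        fun k hk => by rw [if_neg (Finset.mem_range.1 hk).ne]; ring
      rw [Finset.sum_range_succ, if_pos rfl, Finset.sum_congr rfl hlow, Finset.sum_neg_distrib,
        Finset.mul_sum]
      ring
    rw [hsum]
    refine ((((hpow t ht).mul hlog).const_mul _).sub ((hb t ht).const_mul _)).congr_deriv ?_
    rw [rpow_add_one ht.ne']
    push_cast
    field_simp
    ring

lemma neutrixLim_integral_rpow_mul_log_pow {μ : ℝ} (hμ : μ ≤ -1) (n : ℕ) {b : ℝ} (hb : 0 < b) :
    ∃ c, NeutrixLim (fun ε => ∫ t in Ioo ε b, t ^ μ * log t ^ n) c := by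
  rcases hμ.eq_or_lt with rfl | hlt
  · refine ⟨_, neutrixLim_integral_of_hasDerivAt hb (A := fun t => (n + 1 : ℝ)⁻¹ * log t ^ (n + 1))
      (fun t ht => ?_) (continuousOn_rpow_mul_log_pow _ n) ?_⟩
    · refine (((hasDerivAt_log ht.ne').pow (n + 1)).const_mul _).congr_deriv ?_
      rw [rpow_neg_one]
      push_cast
      field_simp
    · simpa [neg_mul] using negligible_log_pow (Nat.le_add_left 1 n) (-(n + 1 : ℝ)⁻¹)
  · obtain ⟨a, ha⟩ := exists_hasDerivAt_sum_rpow_mul_log_pow hlt.ne n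
    refine ⟨_, neutrixLim_integral_of_hasDerivAt hb ha (continuousOn_rpow_mul_log_pow μ n) ?_⟩
    simpa using (negligible_sum_rpow_mul_log_pow (by linarith) _ a).const_mul (-1)

lemma abs_log_pow_le {t e : ℝ} (ht : 0 < t) (ht1 : t ≤ 1) (he : 0 < e) (n : ℕ) :
    |log t| ^ n ≤ e⁻¹ ^ n * t ^ (-(e * n)) := by
  have hlog : |log t| ≤ e⁻¹ * t ^ (-e) := by
    have h := log_le_rpow_div (inv_pos.2 ht).le he
    rwa [log_inv, inv_rpow ht.le, ← rpow_neg ht.le, div_eq_inv_mul,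
      ← abs_of_nonpos (log_nonpos ht.le ht1)] at h
  calc |log t| ^ n ≤ (e⁻¹ * t ^ (-e)) ^ n := pow_le_pow_left₀ (abs_nonneg _) hlog n
    _ = e⁻¹ ^ n * t ^ (-(e * n)) := by
      rw [mul_pow, ← rpow_natCast (t ^ (-e)), ← rpow_mul ht.le, neg_mul]

lemma integrableOn_rpow_mul_log_pow_mul {x : ℝ} (hx : -1 < x) (n : ℕ) {b : ℝ} (hb₀ : 0 < b)
    (hb₁ : b ≤ 1) {g : ℝ → ℝ} (hg : ContinuousOn g (Icc 0 b)) :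
    IntegrableOn (fun t => t ^ x * log t ^ n * g t) (Ioo 0 b) := by
  obtain ⟨C, hC⟩ := isCompact_Icc.exists_bound_of_continuousOn hg
  -- any `e` with `x - e n > -1` works: the logarithm costs at most a power `t^(-e)`
  set e := (x + 1) / (n + 1)
  have he : 0 < e := div_pos (by linarith) (by positivity)
  have hy : -1 < x - e * n := by
    have : e * n < x + 1 := by
      rw [div_mul_eq_mul_div, div_lt_iff₀ (by positivity)]; nlinarith
    linarith
  refine Integrable.mono' (((intervalIntegral.integrableOn_Ioo_rpow_iff hb₀).2 hy).const_mul
    (C * e⁻¹ ^ n)) (((continuousOn_rpow_mul_log_pow x n).mono fun t ht => ht.1).mul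
      (hg.mono Ioo_subset_Icc_self) |>.aestronglyMeasurable measurableSet_Ioo) ?_
  filter_upwards [ae_restrict_mem measurableSet_Ioo] with t ht
  have htx : 0 ≤ t ^ x := rpow_nonneg ht.1.le x
  calc ‖t ^ x * log t ^ n * g t‖ = t ^ x * |log t| ^ n * ‖g t‖ := by
        rw [norm_mul, norm_mul, norm_pow, norm_of_nonneg htx, Real.norm_eq_abs]
    _ ≤ t ^ x * (e⁻¹ ^ n * t ^ (-(e * n))) * C :=
        mul_le_mul (mul_le_mul_of_nonneg_left (abs_log_pow_le ht.1 (ht.2.le.trans hb₁) he n) htx)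
          (hC t (Ioo_subset_Icc_self ht)) (norm_nonneg _)
          (mul_nonneg htx (mul_nonneg (by positivity) (rpow_nonneg ht.1.le _)))
    _ = C * e⁻¹ ^ n * t ^ (x - e * n) := by
        rw [sub_eq_add_neg, rpow_add ht.1]; ring

lemma tendsto_setIntegral_Ioo_nhdsGT {f : ℝ → ℝ} {a b : ℝ} (hab : a < b)
    (hf : IntegrableOn f (Ioo a b)) :
    Tendsto (fun ε => ∫ t in Ioo ε b, f t) (𝓝[>] a) (𝓝 (∫ t in Ioo a b, f t)) := by
  have hf' : IntegrableOn f (uIcc a b) := by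
    rwa [uIcc_of_le hab.le, integrableOn_Icc_iff_integrableOn_Ioo]
  have hcont := intervalIntegral.continuousOn_primitive_interval_left hf' a left_mem_uIcc
  rw [uIcc_of_le hab.le] at hcont
  have hIoo : ∀ ε, ε ≤ b → ∫ t in ε..b, f t = ∫ t in Ioo ε b, f t := fun ε hε => by
    rw [intervalIntegral.integral_of_le hε, integral_Ioc_eq_integral_Ioo]
  rw [← hIoo a hab.le]
  refine (hcont.mono_of_mem_nhdsWithin (Icc_mem_nhdsGT hab)).tendsto.congr' ?_
  filter_upwards [Ioo_mem_nhdsGT hab] with ε hε using hIoo ε hε.2.le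

lemma AnalyticOnNhd.dslope {𝕜 E : Type*} [NontriviallyNormedField 𝕜] [NormedAddCommGroup E]
    [NormedSpace 𝕜 E] {f : 𝕜 → E} {s : Set 𝕜} {a : 𝕜} (hf : AnalyticOnNhd 𝕜 f s) (ha : a ∈ s) :
    AnalyticOnNhd 𝕜 (dslope f a) s := by
  intro z hz
  rcases eq_or_ne z a with rfl | hne
  · obtain ⟨p, hp⟩ := hf z ha
    exact hp.has_fpower_series_dslope_fslope.analyticAt
  · refine AnalyticAt.congr ?_ (dslope_eventuallyEq_slope_of_ne f hne).symm
    have h : AnalyticAt 𝕜 (fun w => (w - a)⁻¹ • (f w - f a)) z :=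
      ((analyticAt_id.sub analyticAt_const).inv (sub_ne_zero.2 hne)).smul
        ((hf z hz).sub analyticAt_const)
    simpa [slope_fun_def] using h

lemma setIntegral_rpow_mul_log_pow_mul_eq {b x ε : ℝ} (hε : 0 < ε) (n : ℕ) {g : ℝ → ℝ}
    (hg : AnalyticOnNhd ℝ g (Icc 0 b)) :
    ∫ t in Ioo ε b, t ^ x * log t ^ n * g t =
      (∫ t in Ioo ε b, t ^ x * log t ^ n) * g 0 +
        ∫ t in Ioo ε b, t ^ (x + 1) * log t ^ n * dslope g 0 t := by
  obtain hbε | hεb := le_or_gt b ε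
  · simp [Ioo_eq_empty_of_le hbε]
  have hpos : Icc ε b ⊆ Ioi 0 := fun t ht => hε.trans_le ht.1
  have hψ : ContinuousOn (dslope g 0) (Icc ε b) :=
    (hg.dslope ⟨le_rfl, (hε.trans hεb).le⟩).continuousOn.mono (Icc_subset_Icc_left hε.le)
  have h₁ : IntegrableOn (fun t => t ^ x * log t ^ n * g 0) (Ioo ε b) :=
    (((continuousOn_rpow_mul_log_pow x n).mono hpos).mul continuousOn_const).integrableOn_Icc
      |>.mono_set Ioo_subset_Icc_self
  have h₂ : IntegrableOn (fun t => t ^ (x + 1) * log t ^ n * dslope g 0 t) (Ioo ε b) :=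
    (((continuousOn_rpow_mul_log_pow (x + 1) n).mono hpos).mul hψ).integrableOn_Icc
      |>.mono_set Ioo_subset_Icc_self
  rw [← integral_mul_const, ← integral_add h₁ h₂]
  refine setIntegral_congr_fun measurableSet_Ioo fun t ht => ?_
  have hslope : t * dslope g 0 t = g t - g 0 := by simpa using sub_smul_dslope g 0 t
  rw [rpow_add_one (hε.trans ht.1).ne']
  linear_combination -(t ^ x * log t ^ n) * hslope

theorem exists_neutrixLim_integral_rpow_mul_log_pow_mul {b : ℝ} (hb₀ : 0 < b) (hb₁ : b ≤ 1)
    {g : ℝ → ℝ} (hg : AnalyticOnNhd ℝ g (Icc 0 b)) (x : ℝ) (n : ℕ) :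
    ∃ c, NeutrixLim (fun ε => ∫ t in Ioo ε b, t ^ x * log t ^ n * g t) c := by
  obtain ⟨m, hm⟩ := exists_nat_gt (-1 - x)
  induction m generalizing x g with
  | zero =>
    have hx : -1 < x := by simpa using hm
    exact ⟨_, neutrixLim_of_tendsto <| tendsto_setIntegral_Ioo_nhdsGT hb₀ <|
      integrableOn_rpow_mul_log_pow_mul hx n hb₀ hb₁ hg.continuousOn⟩
  | succ m ih =>
    rcases lt_or_ge (-1) x with hx | hx
    · exact ih hg x (by linarith)
    obtain ⟨c₁, h₁⟩ := neutrixLim_integral_rpow_mul_log_pow hx n hb₀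
    obtain ⟨c₂, h₂⟩ := ih (hg.dslope ⟨le_rfl, hb₀.le⟩) (x + 1) (by push_cast at hm; linarith)
    refine ⟨_, ((h₁.mul_const (g 0)).add h₂).congr ?_⟩
    filter_upwards [self_mem_nhdsWithin] with ε hε
    exact (setIntegral_rpow_mul_log_pow_mul_eq hε n hg).symm

theorem stmt6 (x : ℝ) (n r : ℕ) :
    ∃ c : ℝ, NeutrixLim (fun ε => ∫ t in Set.Ioo ε (1/2 : ℝ),
      t ^ x * Real.log t ^ n * Real.log (1 - t) ^ r) c :=
  exists_neutrixLim_integral_rpow_mul_log_pow_mul (by norm_num) (by norm_num)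
    (fun t ht => ((analyticAt_const.sub analyticAt_id).log
      (show (0 : ℝ) < 1 - t by linarith [ht.2])).pow r) x n
end

section
/- For every integer m ≥ 0 and every ε ∈ (0,1), ∫_ε^1 (1 − t^{−m−1})/(1−t) dt = log ε + Σ_{j=1}^m (1 − ε^{−j})/j; consequently the neutrix limit as ε → 0⁺ of ∫_ε^1 (1 − t^{−m−1})/(1−t) dt equals the harmonic number H_m = Σ_{j=1}^m 1/j. -/
/-! For `0 < t < 1`, `(1 - t^(-m-1)) / (1 - t) = -∑_{k=0}^{m} t^(-k-1)` is a geometric sum in `t⁻¹`,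
which integrates termwise over `(ε, 1)`: the term `t⁻¹` gives `log ε` and the term `t^(-j-1)`
gives `(1 - ε^(-j)) / j`. Removing the negligible part `log ε - ∑ ε^(-j) / j` leaves the constant
`H_m` for every `ε`. -/

open MeasureTheory Real Filter Set

theorem one_sub_pow_succ_div_one_sub_inv {K : Type*} [Field K] {x : K} (h0 : x ≠ 0) (h1 : x ≠ 1)
    (m : ℕ) : (1 - x ^ (m + 1)) / (1 - x⁻¹) = -(x + ∑ j ∈ Finset.Icc 1 m, x ^ (j + 1)) := by
  have hx : 1 - x⁻¹ ≠ 0 := by rwa [sub_ne_zero, ne_comm, inv_ne_one]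
  induction m with
  | zero => rw [Finset.Icc_eq_empty_of_lt one_pos, Finset.sum_empty]; field_simp; ring
  | succ n ih =>
    rw [Finset.sum_Icc_succ_top (by omega), ← add_assoc, neg_add, ← ih]
    field_simp
    ring

theorem Real.rpow_neg_natCast_sub_one {t : ℝ} (ht : 0 < t) (j : ℕ) :
    t ^ (-(j : ℝ) - 1) = t⁻¹ ^ (j + 1) := by
  rw [show -(j : ℝ) - 1 = -((j + 1 : ℕ) : ℝ) by push_cast; ring, rpow_neg ht.le, rpow_natCast,
    inv_pow]

theorem integral_rpow_neg_sub_one {a b r : ℝ} (ha : 0 < a) (hb : 0 < b) (hr : r ≠ 0) :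
    ∫ t in a..b, t ^ (-r - 1) = (a ^ (-r) - b ^ (-r)) / r := by
  rw [integral_rpow (Or.inr ⟨by contrapose! hr; linarith, notMem_uIcc_of_lt ha hb⟩),
    sub_add_cancel, div_neg, ← neg_div, neg_sub]

theorem integral_Ioo_one_sub_rpow_div_one_sub (m : ℕ) {ε : ℝ} (hε : ε ∈ Ioo (0 : ℝ) 1) :
    ∫ t in Ioo ε 1, (1 - t ^ (-(m : ℝ) - 1)) / (1 - t) =
      log ε + ∑ j ∈ Finset.Icc 1 m, (1 - ε ^ (-(j : ℝ))) / j := by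
  obtain ⟨hε0, hε1⟩ := hε
  have h0 : (0 : ℝ) ∉ uIcc ε 1 := notMem_uIcc_of_lt hε0 one_pos
  have hf : EqOn (fun t : ℝ => (1 - t ^ (-(m : ℝ) - 1)) / (1 - t))
      (fun t => -(t⁻¹ + ∑ j ∈ Finset.Icc 1 m, t ^ (-(j : ℝ) - 1))) (Ioo ε 1) := by
    intro t ⟨hεt, ht1⟩
    have ht : 0 < t := hε0.trans hεt
    simp only [rpow_neg_natCast_sub_one ht]
    simpa only [inv_inv] using
      one_sub_pow_succ_div_one_sub_inv (inv_ne_zero ht.ne') (inv_ne_one.mpr ht1.ne) m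
  have hint : ∀ j ∈ Finset.Icc 1 m,
      IntervalIntegrable (fun t : ℝ => t ^ (-(j : ℝ) - 1)) volume ε 1 := fun j _ =>
    intervalIntegral.intervalIntegrable_rpow (Or.inr h0)
  have hinv : IntervalIntegrable (fun t : ℝ => t⁻¹) volume ε 1 :=
    intervalIntegrable_inv_iff.mpr (Or.inr h0)
  have hsum : IntervalIntegrable (fun t : ℝ => ∑ j ∈ Finset.Icc 1 m, t ^ (-(j : ℝ) - 1))
      volume ε 1 := by
    simpa only [← Finset.sum_fn] using IntervalIntegrable.sum _ hint
  rw [setIntegral_congr_fun measurableSet_Ioo hf, ← integral_Ioc_eq_integral_Ioo,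
    ← intervalIntegral.integral_of_le hε1.le, intervalIntegral.integral_neg,
    intervalIntegral.integral_add hinv hsum, intervalIntegral.integral_finsetSum hint,
    integral_inv_of_pos hε0 one_pos, one_div, log_inv, neg_add, neg_neg, ← Finset.sum_neg_distrib]
  congr 1
  refine Finset.sum_congr rfl fun j hj => ?_
  have hj : (j : ℝ) ≠ 0 :=
    Nat.cast_ne_zero.mpr (Nat.one_le_iff_ne_zero.mp (Finset.mem_Icc.mp hj).1)
  rw [integral_rpow_neg_sub_one hε0 one_pos hj, one_rpow, ← neg_div, neg_sub]

theorem negligible_log_sub_sum_rpow_neg_div (m : ℕ) :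
    Negligible fun ε => log ε - ∑ j ∈ Finset.Icc 1 m, ε ^ (-(j : ℝ)) / j := by
  have hinj : InjOn (fun j : ℕ => (-(j : ℝ), 0)) (Finset.Icc 1 m) := fun i _ j _ h => by
    simpa using h
  refine ⟨(Finset.Icc 1 m).image fun j : ℕ => (-(j : ℝ), 0), fun p => 1 / p.1, {1}, fun _ => 1,
    ?_, by simp, fun ε => ?_⟩
  · simp only [Finset.mem_image, Finset.mem_Icc]
    rintro _ ⟨j, ⟨hj, -⟩, rfl⟩
    exact neg_neg_of_pos (Nat.cast_pos.mpr hj)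
  · dsimp only
    rw [Finset.sum_image hinj, Finset.sum_singleton, sub_eq_add_neg, ← Finset.sum_neg_distrib,
      add_comm]
    simp only [pow_zero, pow_one, mul_one, one_mul, inv_neg, neg_mul, div_eq_inv_mul]

theorem stmt15 (m : ℕ) :
    (∀ ε ∈ Set.Ioo (0 : ℝ) 1,
      ∫ t in Set.Ioo ε 1, (1 - t ^ (-(m : ℝ) - 1)) / (1 - t) =
        Real.log ε + ∑ j ∈ Finset.Icc 1 m, (1 - ε ^ (-(j : ℝ))) / (j : ℝ)) ∧
    NeutrixLim (fun ε => ∫ t in Set.Ioo ε 1, (1 - t ^ (-(m : ℝ) - 1)) / (1 - t))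
      (∑ j ∈ Finset.Icc 1 m, (1 : ℝ) / (j : ℝ)) := by
  refine ⟨fun ε => integral_Ioo_one_sub_rpow_div_one_sub m,
    ⟨_, negligible_log_sub_sum_rpow_neg_div m, tendsto_const_nhds.congr' ?_⟩⟩
  filter_upwards [Ioo_mem_nhdsGT one_pos] with ε hε
  rw [integral_Ioo_one_sub_rpow_div_one_sub m hε, add_sub_sub_cancel, ← Finset.sum_add_distrib]
  exact Finset.sum_congr rfl fun j _ => by rw [← add_div, sub_add_cancel]
end
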